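/- Let α ∈ ℝ and let u, ψ : ℝ × ℝ → ℍ be smooth with u_t = 2α²[[u,u_x],u] + α[u,u_xx] + u_xxx (the second mKdV family at β = 4α², whose real scalar reduction is the linear Airy equation) and ψ_t = α[u_xx,ψ] + 2α²([u,u_x]*ψ − ψ*[u,u_x]). Then the function φ := ψ_x − α[u,ψ] satisfies φ_t = α[u_xx,φ] + 2α²([u,u_x]*φ − φ*[u,u_x]). -/

import Mathlib

/-- Partial derivative in `t` (the first coordinate). -/
noncomputable def pt (f : ℝ × ℝ → Quaternion ℝ) : ℝ × ℝ → Quaternion ℝ :=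
  fun p => deriv (fun s => f (s, p.2)) p.1

/-- Partial derivative in `x` (the second coordinate). -/
noncomputable def px (f : ℝ × ℝ → Quaternion ℝ) : ℝ × ℝ → Quaternion ℝ :=
  fun p => deriv (fun y => f (p.1, y)) p.2

section helpers
variable {f g : ℝ × ℝ → Quaternion ℝ} {p : ℝ × ℝ}

lemma sliceX (hf : ContDiff ℝ (⊤ : ℕ∞) f) (a b : ℝ) :
    DifferentiableAt ℝ (fun y => f (a, y)) b :=
  ((hf.differentiable (by simp)) (a, b)).comp b
    ((differentiableAt_const a).prodMk differentiableAt_id)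

lemma sliceT (hf : ContDiff ℝ (⊤ : ℕ∞) f) (a b : ℝ) :
    DifferentiableAt ℝ (fun s => f (s, b)) a :=
  ((hf.differentiable (by simp)) (a, b)).comp a
    (differentiableAt_id.prodMk (differentiableAt_const b))

lemma px_mul (hf : ContDiff ℝ (⊤ : ℕ∞) f) (hg : ContDiff ℝ (⊤ : ℕ∞) g) (p : ℝ × ℝ) :
    px (fun q => f q * g q) p = px f p * g p + f p * px g p :=
  deriv_mul (sliceX hf p.1 p.2) (sliceX hg p.1 p.2)

lemma px_add (hf : ContDiff ℝ (⊤ : ℕ∞) f) (hg : ContDiff ℝ (⊤ : ℕ∞) g) (p : ℝ × ℝ) :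
    px (fun q => f q + g q) p = px f p + px g p :=
  deriv_add (sliceX hf p.1 p.2) (sliceX hg p.1 p.2)

lemma px_sub (hf : ContDiff ℝ (⊤ : ℕ∞) f) (hg : ContDiff ℝ (⊤ : ℕ∞) g) (p : ℝ × ℝ) :
    px (fun q => f q - g q) p = px f p - px g p :=
  deriv_sub (sliceX hf p.1 p.2) (sliceX hg p.1 p.2)

lemma px_smul (c : ℝ) (hf : ContDiff ℝ (⊤ : ℕ∞) f) (p : ℝ × ℝ) :
    px (fun q => c • f q) p = c • px f p :=
  deriv_const_smul c (sliceX hf p.1 p.2)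

lemma pt_mul (hf : ContDiff ℝ (⊤ : ℕ∞) f) (hg : ContDiff ℝ (⊤ : ℕ∞) g) (p : ℝ × ℝ) :
    pt (fun q => f q * g q) p = pt f p * g p + f p * pt g p :=
  deriv_mul (sliceT hf p.1 p.2) (sliceT hg p.1 p.2)

lemma pt_sub (hf : ContDiff ℝ (⊤ : ℕ∞) f) (hg : ContDiff ℝ (⊤ : ℕ∞) g) (p : ℝ × ℝ) :
    pt (fun q => f q - g q) p = pt f p - pt g p :=
  deriv_sub (sliceT hf p.1 p.2) (sliceT hg p.1 p.2)

lemma pt_smul (c : ℝ) (hf : ContDiff ℝ (⊤ : ℕ∞) f) (p : ℝ × ℝ) :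
    pt (fun q => c • f q) p = c • pt f p :=
  deriv_const_smul c (sliceT hf p.1 p.2)

lemma px_eq_fderiv (hf : ContDiff ℝ (⊤ : ℕ∞) f) :
    px f = fun p => fderiv ℝ f p (0, 1) := by
  funext p
  have h1 : HasDerivAt (fun y : ℝ => ((p.1 : ℝ), y)) ((0 : ℝ), (1 : ℝ)) p.2 :=
    (hasDerivAt_const p.2 p.1).prodMk (hasDerivAt_id p.2)
  have h2 : HasFDerivAt f (fderiv ℝ f p) p :=
    ((hf.differentiable (by simp)) p).hasFDerivAt
  exact (h2.comp_hasDerivAt p.2 h1).deriv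

lemma pt_eq_fderiv (hf : ContDiff ℝ (⊤ : ℕ∞) f) :
    pt f = fun p => fderiv ℝ f p (1, 0) := by
  funext p
  have h1 : HasDerivAt (fun s : ℝ => (s, p.2)) ((1 : ℝ), (0 : ℝ)) p.1 :=
    (hasDerivAt_id p.1).prodMk (hasDerivAt_const p.1 p.2)
  have h2 : HasFDerivAt f (fderiv ℝ f p) p :=
    ((hf.differentiable (by simp)) p).hasFDerivAt
  exact (h2.comp_hasDerivAt p.1 h1).deriv

lemma contDiff_px (hf : ContDiff ℝ (⊤ : ℕ∞) f) : ContDiff ℝ (⊤ : ℕ∞) (px f) := by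
  rw [px_eq_fderiv hf]
  exact (hf.fderiv_right (by simp)).clm_apply contDiff_const

lemma contDiff_pt (hf : ContDiff ℝ (⊤ : ℕ∞) f) : ContDiff ℝ (⊤ : ℕ∞) (pt f) := by
  rw [pt_eq_fderiv hf]
  exact (hf.fderiv_right (by simp)).clm_apply contDiff_const

lemma dirderiv_fderiv (hf : ContDiff ℝ (⊤ : ℕ∞) f) (v : ℝ × ℝ) (p : ℝ × ℝ) :
    fderiv ℝ (fun q => fderiv ℝ f q v) p = (fderiv ℝ (fderiv ℝ f) p).flip v := by
  have hd : DifferentiableAt ℝ (fderiv ℝ f) p :=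
    ((hf.fderiv_right (m := 1) (WithTop.coe_le_coe.2 le_top)).differentiable one_ne_zero) p
  have := fderiv_clm_apply (c := fderiv ℝ f) (u := fun _ => v) hd (differentiableAt_const v)
  simpa using this

lemma pt_px_comm (hf : ContDiff ℝ (⊤ : ℕ∞) f) (p : ℝ × ℝ) :
    pt (px f) p = px (pt f) p := by
  have hsymm : IsSymmSndFDerivAt ℝ f p :=
    (hf.contDiffAt).isSymmSndFDerivAt (by simp only [minSmoothness_of_isRCLikeNormedField]; exact WithTop.coe_le_coe.2 (le_top : (2 : ℕ∞) ≤ ⊤))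
  have hx := px_eq_fderiv hf
  have ht := pt_eq_fderiv hf
  have cx : ContDiff ℝ (⊤ : ℕ∞) (px f) := contDiff_px hf
  have ct : ContDiff ℝ (⊤ : ℕ∞) (pt f) := contDiff_pt hf
  rw [pt_eq_fderiv cx, px_eq_fderiv ct]
  simp only [hx, ht]
  rw [dirderiv_fderiv hf, dirderiv_fderiv hf]
  simpa using hsymm (1, 0) (0, 1)

end helpers

/-- Lax pair for the second mKdV family at `β = 4α²`:
`uₜ = 2α²[[u,uₓ],u] + α[u,uₓₓ] + uₓₓₓ`. -/
theorem mkdv2_airy_lax (α : ℝ) (u ψ φ : ℝ × ℝ → Quaternion ℝ)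
    (hu : ContDiff ℝ (⊤ : ℕ∞) u) (hψ : ContDiff ℝ (⊤ : ℕ∞) ψ)
    (hut : ∀ p, pt u p = (2 * α ^ 2) • ((u p * px u p - px u p * u p) * u p
        - u p * (u p * px u p - px u p * u p))
      + α • (u p * px (px u) p - px (px u) p * u p) + px (px (px u)) p)
    (hψt : ∀ p, pt ψ p = α • (px (px u) p * ψ p - ψ p * px (px u) p)
      + (2 * α ^ 2) • ((u p * px u p - px u p * u p) * ψ p
        - ψ p * (u p * px u p - px u p * u p)))
    (hφ : φ = fun p => px ψ p - α • (u p * ψ p - ψ p * u p)) :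
    ∀ p, pt φ p = α • (px (px u) p * φ p - φ p * px (px u) p)
      + (2 * α ^ 2) • ((u p * px u p - px u p * u p) * φ p
        - φ p * (u p * px u p - px u p * u p)) := by
  have hux : ContDiff ℝ (⊤ : ℕ∞) (px u) := contDiff_px hu
  have huxx : ContDiff ℝ (⊤ : ℕ∞) (px (px u)) := contDiff_px hux
  have hψx : ContDiff ℝ (⊤ : ℕ∞) (px ψ) := contDiff_px hψ
  have hC : ContDiff ℝ (⊤ : ℕ∞) (fun q => u q * px u q - px u q * u q) :=
    (hu.mul hux).sub (hux.mul hu)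
  have hF : pt ψ = fun p => α • (px (px u) p * ψ p - ψ p * px (px u) p)
      + (2 * α ^ 2) • ((u p * px u p - px u p * u p) * ψ p
        - ψ p * (u p * px u p - px u p * u p)) := funext hψt
  intro p
  simp only [hφ]
  rw [pt_sub hψx (((hu.mul hψ).sub (hψ.mul hu)).const_smul α),
      pt_smul α ((hu.mul hψ).sub (hψ.mul hu)),
      pt_sub (hu.mul hψ) (hψ.mul hu),
      pt_mul hu hψ, pt_mul hψ hu,
      pt_px_comm hψ]
  simp only [hF]
  rw [px_add (((huxx.mul hψ).sub (hψ.mul huxx)).const_smul α)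
        (((hC.mul hψ).sub (hψ.mul hC)).const_smul (2 * α ^ 2)),
      px_smul α ((huxx.mul hψ).sub (hψ.mul huxx)),
      px_sub (huxx.mul hψ) (hψ.mul huxx),
      px_mul huxx hψ, px_mul hψ huxx,
      px_smul (2 * α ^ 2) ((hC.mul hψ).sub (hψ.mul hC)),
      px_sub (hC.mul hψ) (hψ.mul hC),
      px_mul hC hψ, px_mul hψ hC,
      px_sub (hu.mul hux) (hux.mul hu),
      px_mul hu hux, px_mul hux hu,
      hut p]
  simp only [smul_sub, smul_add, mul_sub, sub_mul, mul_add, add_mul,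
    smul_mul_assoc, mul_smul_comm, smul_smul, mul_assoc]
  have h2 : ∀ x : Quaternion ℝ, (2*α^2)•x = α^2•x + α^2•x := fun x => by rw [two_mul, add_smul]
  have h3 : ∀ x : Quaternion ℝ, (2*(α^2*α))•x = (α^2*α)•x + (α^2*α)•x := fun x => by rw [two_mul, add_smul]
  simp only [show α*(2*α^2) = 2*(α^2*α) by ring, show α*α = α^2 by ring, h2, h3]
  abel
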